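/- arXiv:1102.3068 — 6 statements merged into one kernel-verified Lean document; each statement's English description precedes it below -/
import Mathlib

section
/- For every positive integer n that is coprime to p i for every index i, the n-th iterate R^[n] (which is the translation by n • g) is ergodic with respect to μ. -/
open MeasureTheory

/-! By the Chinese remainder theorem the natural numbers are dense in `∏ i, ZMod (p i)`, and
multiplying by the unit `n • g` keeps them dense; a translation by an element whose multiples are dense is
ergodic for every finite translation-invariant measure. -/

theorem denseRange_natCast_pi_zmod {ι : Type} {m : ι → ℕ} (hm : ∀ i, m i ≠ 0)
    (hcop : Pairwise fun i j => Nat.Coprime (m i) (m j)) :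
    DenseRange (Nat.cast : ℕ → ∀ i, ZMod (m i)) := by
  intro x
  rw [mem_closure_iff]
  intro U hU hxU
  obtain ⟨I, u, hu, hIU⟩ := isOpen_pi_iff.mp hU x hxU
  obtain ⟨k, hk⟩ := Nat.chineseRemainderOfFinset (fun i => (x i).val) m I (fun i _ => hm i)
    (fun i _ j _ hij => hcop hij)
  refine ⟨k, hIU fun i hi => ?_, k, rfl⟩
  have : NeZero (m i) := ⟨hm i⟩
  have hki : (k : ZMod (m i)) = x i := by
    rw [(ZMod.natCast_eq_natCast_iff _ _ _).mpr (hk i hi), ZMod.natCast_zmod_val]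
  simpa only [Pi.natCast_apply, hki] using (hu i hi).2

theorem denseRange_nsmul_of_isUnit {R : Type*} [Semiring R] [TopologicalSpace R]
    [ContinuousMul R] (hR : DenseRange (Nat.cast : ℕ → R)) {u : R} (hu : IsUnit u) :
    DenseRange (fun k : ℕ => k • u) := by
  have hmul : Function.Surjective (· * u) := (Units.mulRight hu.unit).surjective
  simpa only [Function.comp_def, nsmul_eq_mul] using
    hmul.denseRange.comp hR (continuous_mul_const u)

theorem translation_power_coprime_ergodic_general
    (p : ℕ → ℕ) (hp : ∀ i, (p i).Prime) (hinj : Function.Injective p)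
    (μ : Measure (∀ i, ZMod (p i))) [IsProbabilityMeasure μ]
    (hμ : ∀ x : ∀ i, ZMod (p i), μ.map (fun y => y + x) = μ)
    (g : ∀ i, ZMod (p i)) (hg : ∀ i, g i = 1)
    (n : ℕ) (hcop : ∀ i, Nat.Coprime n (p i)) :
    Ergodic ((fun x => x + g)^[n]) μ := by
  have : ∀ i, NeZero (p i) := fun i => ⟨(hp i).ne_zero⟩
  have : μ.IsAddLeftInvariant := ⟨fun x => by simpa only [add_comm x] using hμ x⟩
  have hunit : IsUnit (n • g) := by
    rw [show g = 1 from funext hg, nsmul_one, Pi.isUnit_iff]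
    exact fun i => (ZMod.isUnit_iff_coprime _ _).mpr (hcop i)
  have hdense : DenseRange (fun k : ℕ => k • n • g) :=
    denseRange_nsmul_of_isUnit (denseRange_natCast_pi_zmod (fun i => (hp i).ne_zero)
      fun i j hij => (Nat.coprime_primes (hp i) (hp j)).mpr (hinj.ne hij)) hunit
  rw [add_right_iterate]
  simpa only [add_comm] using ergodic_add_left_of_denseRange_nsmul hdense μ

/-- With `X = ∏ i, ZMod (p i)` (the `p i` pairwise distinct primes),
`μ` its Haar probability measure and `R x = x + g` the translation by the element `g`
with all coordinates `1`: for every positive integer `n` coprime to every `p i`, the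
iterate `R^[n]` (the translation by `n • g`) is ergodic with respect to `μ`. -/
theorem translation_power_coprime_ergodic
    (p : ℕ → ℕ) (hp : ∀ i, (p i).Prime) (hinj : Function.Injective p)
    (μ : Measure (∀ i, ZMod (p i))) [IsProbabilityMeasure μ]
    (hμ : ∀ x : ∀ i, ZMod (p i), μ.map (fun y => y + x) = μ)
    (g : ∀ i, ZMod (p i)) (hg : ∀ i, g i = 1)
    (n : ℕ) (hn : 0 < n) (hcop : ∀ i, Nat.Coprime n (p i)) :
    Ergodic ((fun x => x + g)^[n]) μ :=
  translation_power_coprime_ergodic_general p hp hinj μ hμ g hg n hcop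
end

section
/- If n is a positive integer such that p i divides n for some index i, then the n-th iterate R^[n] is not ergodic with respect to μ. -/
open MeasureTheory
open scoped ENNReal

/-!
The `i`-th coordinate is a surjective homomorphism onto `ZMod (p i)`, and `R^[n]` is translation
by `n • g`, which lies in its kernel when `p i ∣ n`. The kernel is therefore an invariant set, and
translation invariance of `μ` spreads the mass equally over its `p i` cosets, so it has measure
`1 / p i`, strictly between `0` and `1`.
-/

namespace AddMonoidHom

variable {G H : Type*} [AddGroup G] [MeasurableSpace G] [MeasurableAdd G] [AddGroup H]
  (μ : Measure G) [μ.IsAddRightInvariant] {f : G →+ H}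

theorem measure_preimage_singleton_eq_measure_ker (hf : Function.Surjective f) (c : H) :
    μ (f ⁻¹' {c}) = μ f.ker := by
  obtain ⟨a, rfl⟩ := hf c
  have hfiber : f ⁻¹' {f a} = (· + -a) ⁻¹' f.ker := by
    ext x
    simp [← sub_eq_add_neg, sub_eq_zero]
  rw [hfiber, measure_preimage_add_right]

variable [Fintype H] [MeasurableSpace H] [MeasurableSingletonClass H] [IsProbabilityMeasure μ]

theorem card_mul_measure_ker (hf : Function.Surjective f) (hfm : Measurable f) :
    (Fintype.card H : ℝ≥0∞) * μ f.ker = 1 := by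
  have hsum := sum_measure_preimage_singleton (μ := μ) Finset.univ
    fun c _ => hfm (measurableSet_singleton c)
  simpa [measure_preimage_singleton_eq_measure_ker μ hf] using hsum

theorem not_ergodic_add_right_of_mem_ker (hf : Function.Surjective f) (hfm : Measurable f)
    (hH : 1 < Fintype.card H) {a : G} (ha : a ∈ f.ker) : ¬ Ergodic (· + a) μ := by
  intro hErg
  have hker : MeasurableSet (f.ker : Set G) := hfm (measurableSet_singleton 0)
  have hinv : (· + a) ⁻¹' (f.ker : Set G) = f.ker := by
    ext x
    simp [mem_ker.mp ha]
  have hcard := card_mul_measure_ker μ hf hfm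
  rcases hErg.prob_eq_zero_or_one hker hinv with h | h
  · simp [h] at hcard
  · rw [h, mul_one] at hcard
    exact hH.ne' (mod_cast hcard)

end AddMonoidHom

theorem translation_power_divisible_not_ergodic_general
    (p : ℕ → ℕ) (hp : ∀ i, (p i).Prime)
    (μ : Measure (∀ i, ZMod (p i))) [IsProbabilityMeasure μ]
    (hμ : ∀ x : ∀ i, ZMod (p i), μ.map (fun y => y + x) = μ)
    (g : ∀ i, ZMod (p i)) (hg : ∀ i, g i = 1)
    (n : ℕ) (hdvd : ∃ i, p i ∣ n) :
    ¬ Ergodic ((fun x => x + g)^[n]) μ := by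
  obtain ⟨i, hi⟩ := hdvd
  have : NeZero (p i) := ⟨(hp i).ne_zero⟩
  have : μ.IsAddRightInvariant := ⟨hμ⟩
  let f := Pi.evalAddMonoidHom (fun j => ZMod (p j)) i
  have hng : n • g ∈ f.ker := by
    simp [f, hg, (ZMod.natCast_eq_zero_iff n (p i)).mpr hi]
  rw [add_right_iterate]
  exact f.not_ergodic_add_right_of_mem_ker μ (Function.surjective_eval i) (measurable_pi_apply i)
    (by simpa using (hp i).one_lt) hng

/-- With `X = ∏ i, ZMod (p i)` (the `p i` pairwise distinct primes),
`μ` its Haar probability measure and `R x = x + g` the translation by the element `g`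
with all coordinates `1`: if `n` is a positive integer divisible by some `p i`, then
the iterate `R^[n]` is **not** ergodic with respect to `μ`. -/
theorem translation_power_divisible_not_ergodic
    (p : ℕ → ℕ) (hp : ∀ i, (p i).Prime) (hinj : Function.Injective p)
    (μ : Measure (∀ i, ZMod (p i))) [IsProbabilityMeasure μ]
    (hμ : ∀ x : ∀ i, ZMod (p i), μ.map (fun y => y + x) = μ)
    (g : ∀ i, ZMod (p i)) (hg : ∀ i, g i = 1)
    (n : ℕ) (hn : 0 < n) (hdvd : ∃ i, p i ∣ n) :
    ¬ Ergodic ((fun x => x + g)^[n]) μ :=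
  translation_power_divisible_not_ergodic_general p hp μ hμ g hg n hdvd
end

section
/- For every positive integer q coprime to p i for every index i, there exists a measure-preserving bicontinuous group automorphism Ψ of X (namely multiplication by q in each coordinate) such that Ψ ∘ R = R^[q] ∘ Ψ; in particular R^q is conjugate to R. -/
open MeasureTheory Measure

private lemma iterate_add_eq (G : Type*) [AddCommGroup G] (g : G) (n : ℕ) (x : G) :
    (fun y => y + g)^[n] x = x + n • g := by
  induction n with
  | zero => simp
  | succ n ih => rw [Function.iterate_succ', Function.comp_apply, ih, succ_nsmul, add_assoc]

/-- With `X = ∏ i, ZMod (p i)` (the `p i` pairwise distinct primes,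
each factor discrete, `X` with the product topology), `μ` its Haar probability measure
and `R x = x + g` the translation by the element `g` with all coordinates `1`:
for every positive integer `q` coprime to every `p i` there is a measure-preserving
bicontinuous group automorphism `Ψ` of `X` with `Ψ ∘ R = R^[q] ∘ Ψ`;
in particular `R^q` is conjugate to `R`. -/
theorem exists_conjugation_of_power
    (p : ℕ → ℕ) (hp : ∀ i, (p i).Prime) (hinj : Function.Injective p)
    (μ : Measure (∀ i, ZMod (p i))) [IsProbabilityMeasure μ]
    (hμ : ∀ x : ∀ i, ZMod (p i), μ.map (fun y => y + x) = μ)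
    (g : ∀ i, ZMod (p i)) (hg : ∀ i, g i = 1)
    (q : ℕ) (hq : 0 < q) (hcop : ∀ i, Nat.Coprime q (p i)) :
    ∃ Ψ : (∀ i, ZMod (p i)) ≃+ (∀ i, ZMod (p i)),
      Continuous Ψ ∧ Continuous Ψ.symm ∧ MeasurePreserving Ψ μ μ ∧
      Ψ ∘ (fun x => x + g) = (fun x => x + g)^[q] ∘ Ψ := by
  have hfact : ∀ i, Fact (p i).Prime := fun i => ⟨hp i⟩
  -- the unit `q` in each coordinate
  set u : ∀ i, (ZMod (p i))ˣ := fun i => ZMod.unitOfCoprime q (hcop i) with hu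
  set Ψ : (∀ i, ZMod (p i)) ≃+ (∀ i, ZMod (p i)) :=
    AddEquiv.piCongrRight (fun i => DistribMulAction.toAddEquiv (ZMod (p i)) (u i)) with hΨ
  have hΨ_apply : ∀ x i, Ψ x i = (q : ZMod (p i)) * x i := by
    intro x i
    simp [hΨ, hu, DistribMulAction.toAddEquiv, Units.smul_def, ZMod.coe_unitOfCoprime]
  have hcontΨ : Continuous Ψ := by
    refine continuous_pi fun i => ?_
    have : (fun x : ∀ j, ZMod (p j) => Ψ x i)
        = (fun a : ZMod (p i) => (q : ZMod (p i)) * a) ∘ (fun x => x i) := by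
      funext x; simp [hΨ_apply]
    rw [this]
    exact continuous_of_discreteTopology.comp (continuous_apply i)
  have hcontΨs : Continuous Ψ.symm := by
    refine continuous_pi fun i => ?_
    have : (fun x : ∀ j, ZMod (p j) => Ψ.symm x i)
        = (fun a : ZMod (p i) =>
            (DistribMulAction.toAddEquiv (ZMod (p i)) (u i)).symm a) ∘ (fun x => x i) := by
      funext x; rfl
    rw [this]
    exact continuous_of_discreteTopology.comp (continuous_apply i)
  -- μ is an additive Haar measure
  have hinv : μ.IsAddLeftInvariant := by
    constructor
    intro x
    have : (fun y : ∀ i, ZMod (p i) => x + y) = fun y => y + x := funext fun y => add_comm x y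
    rw [this, hμ x]
  have hopen : μ.IsOpenPosMeasure := by
    refine isOpenPosMeasure_of_addLeftInvariant_of_compact (μ := μ) Set.univ isCompact_univ ?_
    simp
  have hhaar : μ.IsAddHaarMeasure := { }
  have hmp : MeasurePreserving Ψ μ μ := by
    refine AddMonoidHom.measurePreserving (f := Ψ.toAddMonoidHom) hcontΨ Ψ.surjective rfl
  refine ⟨Ψ, hcontΨ, hcontΨs, hmp, ?_⟩
  funext x
  show Ψ (x + g) = (fun y => y + g)^[q] (Ψ x)
  rw [iterate_add_eq, AddEquiv.map_add]
  congr 1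
  funext i
  rw [hΨ_apply, hg i, mul_one, Pi.smul_apply, hg i, nsmul_eq_mul, mul_one]
end

section
/- The cyclic subgroup generated by g, i.e. the set of integer multiples {k • g : k ∈ ℤ}, is dense in X = ∏ i, ZMod (p i). -/
/-!
By the Chinese remainder theorem the integers map onto every finite product of the factors
`ZMod (p i)`, while an open set of the product topology constrains only finitely many coordinates.
-/

open scoped Function

theorem dense_pi_of_exists_eq_on_finset {ι : Type*} {X : ι → Type*}
    [∀ i, TopologicalSpace (X i)] {S : Set (∀ i, X i)}
    (hS : ∀ (s : Finset ι) (x : ∀ i, X i), ∃ y ∈ S, ∀ i ∈ s, y i = x i) : Dense S := by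
  refine dense_iff_inter_open.mpr fun U hU ⟨x, hx⟩ => ?_
  obtain ⟨s, u, hu, hsU⟩ := isOpen_pi_iff.mp hU x hx
  obtain ⟨y, hyS, hyx⟩ := hS s x
  exact ⟨y, hsU fun i hi => hyx i hi ▸ (hu i hi).2, hyS⟩

namespace ZMod

theorem intCast_pi_surjective {ι : Type*} [Fintype ι] (n : ι → ℕ)
    (hn : Pairwise (Nat.Coprime on n)) :
    Function.Surjective (Int.cast : ℤ → ∀ i, ZMod (n i)) := by
  have hcomp : (prodEquivPi n hn ∘ Int.cast : ℤ → ∀ i, ZMod (n i)) = Int.cast :=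
    funext fun k => map_intCast (prodEquivPi n hn) k
  exact hcomp ▸ (prodEquivPi n hn).surjective.comp intCast_surjective

theorem exists_intCast_eq_on_finset {ι : Type*} (n : ι → ℕ) (hn : Pairwise (Nat.Coprime on n))
    (s : Finset ι) (x : ∀ i, ZMod (n i)) : ∃ k : ℤ, ∀ i ∈ s, (k : ZMod (n i)) = x i := by
  obtain ⟨k, hk⟩ := intCast_pi_surjective (fun i : s => n i)
    (fun i j hij => hn (Subtype.coe_injective.ne hij)) (fun i => x i)
  exact ⟨k, fun i hi => congr_fun hk ⟨i, hi⟩⟩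

theorem dense_range_intCast_pi {ι : Type*} (n : ι → ℕ) (hn : Pairwise (Nat.Coprime on n)) :
    Dense (Set.range (Int.cast : ℤ → ∀ i, ZMod (n i))) :=
  dense_pi_of_exists_eq_on_finset fun s x =>
    let ⟨k, hk⟩ := exists_intCast_eq_on_finset n hn s x
    ⟨k, ⟨k, rfl⟩, hk⟩

end ZMod

/-- With `X = ∏ i, ZMod (p i)` (the `p i` pairwise distinct primes,
each factor discrete, `X` with the product topology) and `g ∈ X` the element all of
whose coordinates are `1`: the cyclic subgroup `{k • g : k ∈ ℤ}` generated by `g`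
is dense in `X`. -/
theorem zmultiples_one_dense
    (p : ℕ → ℕ) (hp : ∀ i, (p i).Prime) (hinj : Function.Injective p)
    (g : ∀ i, ZMod (p i)) (hg : ∀ i, g i = 1) :
    Dense (Set.range fun k : ℤ => k • g) := by
  have hcoprime : Pairwise (Nat.Coprime on p) := fun i j hij =>
    (Nat.coprime_primes (hp i) (hp j)).mpr (hinj.ne hij)
  obtain rfl : g = 1 := funext hg
  simpa only [zsmul_one] using ZMod.dense_range_intCast_pi p hcoprime
end

section
/- For every positive integer n coprime to p i for every index i (in particular for n = 1), the Koopman operator of R^[n] on L²(X, μ) has simple spectrum; that is, there exists f ∈ L²(X, μ) whose orbit {f ∘ (R^[n])^k : k ∈ ℤ} has dense linear span in L²(X, μ). -/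
/-!
The characters `χₐ x = ∏ᵢ exp (2πi aᵢ xᵢ / pᵢ)`, indexed by the finitely supported `a`, form a
Hilbert basis of `L²(μ)`: they are orthonormal because `μ` is translation invariant, and total by
Stone–Weierstrass. Each `χₐ` is an eigenvector of the Koopman operator `T` of `x ↦ x + n • g`,
with eigenvalue `χₐ (n • g)`, and these eigenvalues are pairwise distinct because the `pᵢ` are
distinct primes not dividing `n`. For such a diagonal isometry every vector `f` with all
coefficients nonzero is cyclic: by the mean ergodic theorem, the Cesàro means of
`conj (χₐ (n • g)) ^ k • T^[k] f` converge to the component `⟪χₐ, f⟫ • χₐ` of `f`, so every `χₐ`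
lies in the closed span of the orbit of `f`.
-/

open MeasureTheory ComplexConjugate Function Filter Topology Submodule Set

lemma tendsto_inv_mul_geom_sum {𝕜 : Type*} [RCLike 𝕜] {z : 𝕜} (hz : ‖z‖ ≤ 1) :
    Tendsto (fun N : ℕ => (N : 𝕜)⁻¹ * ∑ k ∈ Finset.range N, z ^ k) atTop
      (𝓝 (if z = 1 then 1 else 0)) := by
  split_ifs with h
  · refine tendsto_const_nhds.congr' (eventually_atTop.2 ⟨1, fun N hN => ?_⟩)
    have : (N : 𝕜) ≠ 0 := Nat.cast_ne_zero.2 (by omega)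
    simp [h, this]
  · have hz1 : 0 < ‖z - 1‖ := norm_pos_iff.2 (sub_ne_zero.2 h)
    refine squeeze_zero_norm (fun N => ?_) (tendsto_const_div_atTop_nhds_zero_nat (2 / ‖z - 1‖))
    have hzN : ‖z ^ N - 1‖ ≤ 2 := (norm_sub_le _ _).trans (by
      rw [norm_pow, norm_one]; linarith [pow_le_one₀ (norm_nonneg z) hz (n := N)])
    rw [geom_sum_eq h, norm_mul, norm_div, norm_inv, RCLike.norm_natCast, inv_mul_eq_div]
    gcongr

section HilbertBasis

variable {ι 𝕜 E : Type*} [RCLike 𝕜] [NormedAddCommGroup E] [InnerProductSpace 𝕜 E]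

lemma HilbertBasis.exists_forall_inner_ne_zero [Countable ι] (b : HilbertBasis ι 𝕜 E) :
    ∃ f : E, ∀ i, inner 𝕜 (b i) f ≠ 0 := by
  have := Encodable.ofCountable ι
  set c : ι → 𝕜 := fun i => (((1 / 2 : ℝ) ^ Encodable.encode i : ℝ) : 𝕜)
  have hc : Memℓp c 2 := by
    refine Memℓp.of_exponent_ge (q := 1) (memℓp_gen ?_) (by norm_num)
    simpa [c] using summable_geometric_two_encode (ι := ι)
  refine ⟨b.repr.symm ⟨c, hc⟩, fun i => ?_⟩
  rw [← b.repr_apply_apply, LinearIsometryEquiv.apply_symm_apply]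
  simp [c]

lemma HilbertBasis.inner_apply_of_apply_eq_smul (b : HilbertBasis ι 𝕜 E) (T : E →L[𝕜] E)
    {z : ι → 𝕜} (hT : ∀ i, T (b i) = z i • b i) (i : ι) (y : E) :
    inner 𝕜 (b i) (T y) = z i * inner 𝕜 (b i) y := by
  have : (innerSL 𝕜 (b i)).comp T = z i • innerSL 𝕜 (b i) := by
    refine ContinuousLinearMap.ext_on
      ((Submodule.dense_iff_topologicalClosure_eq_top).2 b.dense_span) ?_
    rintro _ ⟨j, rfl⟩
    simp only [ContinuousLinearMap.comp_apply, innerSL_apply_apply, hT, inner_smul_right,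
      smul_apply, smul_eq_mul]
    obtain rfl | hij := eq_or_ne i j
    · rfl
    · rw [b.orthonormal.inner_eq_zero hij, mul_zero, mul_zero]
  simpa using congrArg (· y) this

lemma HilbertBasis.inner_iterate_of_apply_eq_smul (b : HilbertBasis ι 𝕜 E) (T : E →L[𝕜] E)
    {z : ι → 𝕜} (hT : ∀ i, T (b i) = z i • b i) (i : ι) (y : E) (k : ℕ) :
    inner 𝕜 (b i) (T^[k] y) = z i ^ k * inner 𝕜 (b i) y := by
  induction k with
  | zero => simp
  | succ k ih =>
    rw [iterate_succ_apply', b.inner_apply_of_apply_eq_smul T hT, ih, pow_succ]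
    ring

lemma HilbertBasis.tendsto_inner_birkhoffAverage (b : HilbertBasis ι 𝕜 E) (S : E →L[𝕜] E)
    {z : ι → 𝕜} (hz : ∀ i, ‖z i‖ ≤ 1) (hS : ∀ i, S (b i) = z i • b i) (f : E) (i : ι) :
    Tendsto (fun N => inner 𝕜 (b i) (birkhoffAverage 𝕜 S id N f)) atTop
      (𝓝 ((if z i = 1 then 1 else 0) * inner 𝕜 (b i) f)) := by
  refine (tendsto_inv_mul_geom_sum (hz i)).mul_const _ |>.congr fun N => ?_
  simp only [birkhoffAverage, birkhoffSum, inner_smul_right, inner_sum, id,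
    b.inner_iterate_of_apply_eq_smul S hS, Finset.sum_mul, mul_assoc]

variable [CompleteSpace E]

lemma HilbertBasis.orthogonalProjectionOnto_eqLocus_one (b : HilbertBasis ι 𝕜 E)
    (S : E →L[𝕜] E) (hS : ‖S‖ ≤ 1) {z : ι → 𝕜} (hSb : ∀ i, S (b i) = z i • b i) {j : ι}
    (hz : ∀ i, z i = 1 ↔ i = j) (f : E) :
    ((S.eqLocus (1 : E →L[𝕜] E)).orthogonalProjectionOnto f : E) = inner 𝕜 (b j) f • b j := by
  classical
  have hzle : ∀ i, ‖z i‖ ≤ 1 := fun i => by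
    simpa [hSb, norm_smul, b.orthonormal.1 i] using S.le_of_opNorm_le hS (b i)
  refine b.repr.injective (lp.ext (funext fun i => ?_))
  rw [b.repr_apply_apply, b.repr_apply_apply,
    tendsto_nhds_unique (tendsto_const_nhds.inner (S.tendsto_birkhoffAverage_orthogonalProjection
      hS f)) (b.tendsto_inner_birkhoffAverage S hzle hSb f i),
    inner_smul_right, orthonormal_iff_ite.1 b.orthonormal]
  obtain rfl | hij := eq_or_ne i j
  · simp [(hz i).2 rfl]
  · simp [hij, mt (hz i).1 hij]

lemma HilbertBasis.mem_topologicalClosure_span_iterate (b : HilbertBasis ι 𝕜 E)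
    (T : E →ₗᵢ[𝕜] E) {ω : ι → 𝕜} (hω : Injective ω) (hT : ∀ i, T (b i) = ω i • b i)
    {f : E} {j : ι} (hf : inner 𝕜 (b j) f ≠ 0) :
    b j ∈ (span 𝕜 (range fun k : ℕ => T^[k] f)).topologicalClosure := by
  set V := span 𝕜 (range fun k : ℕ => T^[k] f)
  have hnorm : ∀ i, ‖ω i‖ = 1 := fun i => by
    simpa [hT, norm_smul, b.orthonormal.1 i] using T.norm_map (b i)
  have hconj : conj (ω j) * ω j = 1 := by
    rw [RCLike.conj_mul, hnorm, RCLike.ofReal_one, one_pow]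
  -- Rotating `T` by `conj (ω j)` turns the `ω j`-eigenline into its space of fixed points.
  set S : E →L[𝕜] E := conj (ω j) • T.toContinuousLinearMap
  have hS : ‖S‖ ≤ 1 := by
    refine (ContinuousLinearMap.opNorm_smul_le _ _).trans ?_
    rw [RCLike.norm_conj, hnorm, one_mul]
    exact T.norm_toContinuousLinearMap_le
  have hSb : ∀ i, S (b i) = (conj (ω j) * ω i) • b i := fun i => by
    simp [S, hT, smul_smul]
  have hz : ∀ i, conj (ω j) * ω i = 1 ↔ i = j := fun i => by
    refine ⟨fun h => hω ?_, fun h => h ▸ hconj⟩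
    linear_combination (ω j) * h - (ω i) * hconj
  have hSiter : ∀ k x, S^[k] x = conj (ω j) ^ k • T^[k] x := fun k x => by
    have hcomm : Function.Commute (conj (ω j) • · : E → E) T := fun x => (map_smul T _ x).symm
    rw [show ⇑S = (conj (ω j) • ·) ∘ T from rfl, hcomm.comp_iterate, comp_apply, smul_iterate]
  have hPmem := mem_closure_of_tendsto (S.tendsto_birkhoffAverage_orthogonalProjection hS f)
    (Eventually.of_forall fun N => V.smul_mem _ (V.sum_mem fun k _ => by
      rw [id, hSiter]
      exact V.smul_mem _ (subset_span ⟨k, rfl⟩)))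
  rw [b.orthogonalProjectionOnto_eqLocus_one S hS hSb hz] at hPmem
  simpa [smul_smul, hf] using V.topologicalClosure.smul_mem (inner 𝕜 (b j) f)⁻¹ hPmem

theorem HilbertBasis.dense_span_iterate (b : HilbertBasis ι 𝕜 E) (T : E →ₗᵢ[𝕜] E)
    {ω : ι → 𝕜} (hω : Injective ω) (hT : ∀ i, T (b i) = ω i • b i) {f : E}
    (hf : ∀ i, inner 𝕜 (b i) f ≠ 0) :
    Dense (span 𝕜 (range fun k : ℕ => T^[k] f) : Set E) := by
  rw [Submodule.dense_iff_topologicalClosure_eq_top, eq_top_iff, ← b.dense_span]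
  exact topologicalClosure_minimal _
    (span_le.2 (range_subset_iff.2 fun j => b.mem_topologicalClosure_span_iterate T hω hT (hf j)))
    (isClosed_closure)

end HilbertBasis

theorem Finset.eq_one_of_prod_eq_one_of_pow_eq_one {M ι : Type*} [CommMonoid M] {s : Finset ι}
    {x : ι → M} {m : ι → ℕ} (hm : (s : Set ι).Pairwise (Nat.Coprime on m))
    (hx : ∀ i ∈ s, x i ^ m i = 1) (h : ∏ i ∈ s, x i = 1) {j : ι} (hj : j ∈ s) : x j = 1 := by
  classical
  have hpow : x j ^ ∏ i ∈ s.erase j, m i = 1 := by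
    have hprod : (x j * ∏ i ∈ s.erase j, x i) ^ ∏ i ∈ s.erase j, m i = 1 := by
      rw [Finset.mul_prod_erase s x hj, h, one_pow]
    have hrest : ∏ i ∈ s.erase j, x i ^ ∏ i ∈ s.erase j, m i = 1 :=
      Finset.prod_eq_one fun i hi => by
        obtain ⟨k, hk⟩ := Finset.dvd_prod_of_mem m hi
        rw [hk, pow_mul, hx i (Finset.mem_of_mem_erase hi), one_pow]
    rwa [mul_pow, ← Finset.prod_pow, hrest, mul_one] at hprod
  have hcop : (m j).Coprime (∏ i ∈ s.erase j, m i) := Nat.Coprime.prod_right fun i hi =>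
    hm hj (Finset.mem_of_mem_erase hi) (Finset.ne_of_mem_erase hi).symm
  simpa [hcop] using pow_gcd_eq_one.2 ⟨hx j hj, hpow⟩

theorem integral_addChar_eq_zero {G : Type*} [AddGroup G] [MeasurableSpace G] [MeasurableAdd G]
    (μ : Measure G) [μ.IsAddRightInvariant] {ψ : AddChar G Circle} (hψ : ψ ≠ 1) :
    ∫ x, (ψ x : ℂ) ∂μ = 0 := by
  obtain ⟨y, hy⟩ := AddChar.ne_one_iff.1 hψ
  have h := integral_add_right_eq_self (μ := μ) (fun x => (ψ x : ℂ)) y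
  simp only [AddChar.map_add_eq_mul, Circle.coe_mul, integral_mul_const] at h
  by_contra hI
  exact hy (Circle.coe_eq_one.1 ((mul_eq_left₀ hI).1 h))

lemma MeasureTheory.Lp.compMeasurePreserving_toLp_eq_smul {α : Type*} [TopologicalSpace α]
    [CompactSpace α] [MeasurableSpace α] [BorelSpace α] {μ : Measure α} [IsFiniteMeasure μ]
    {p : ENNReal} [Fact (1 ≤ p)] {T : α → α} (hT : MeasurePreserving T μ μ) {h : C(α, ℂ)} {c : ℂ}
    (hc : ∀ x, h (T x) = c * h x) :
    Lp.compMeasurePreserving T hT (ContinuousMap.toLp p μ ℂ h)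
      = c • ContinuousMap.toLp p μ ℂ h := by
  have hh := ContinuousMap.coeFn_toLp (p := p) (𝕜 := ℂ) μ h
  refine Lp.ext ?_
  filter_upwards [Lp.coeFn_compMeasurePreserving (ContinuousMap.toLp p μ ℂ h) hT,
    hT.quasiMeasurePreserving.ae_eq_comp hh, Lp.coeFn_smul c (ContinuousMap.toLp p μ ℂ h), hh]
    with x h1 h2 h3 h4
  rw [h1, h2, comp_apply, h3, Pi.smul_apply, h4, hc, smul_eq_mul]

section PiZModChar

variable {ι : Type*} [DecidableEq ι] {p : ι → ℕ} [∀ i, NeZero (p i)]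

noncomputable def piZModChar : AddChar (Π₀ i, ZMod (p i)) (AddChar (∀ i, ZMod (p i)) Circle) where
  toFun a :=
    { toFun x := a.prod fun i c => ZMod.toCircle (c * x i)
      map_zero_eq_one' := by simp
      map_add_eq_mul' x y := by
        simp only [DFinsupp.prod, Pi.add_apply, mul_add, AddChar.map_add_eq_mul,
          Finset.prod_mul_distrib] }
  map_zero_eq_one' := by
    ext x
    exact congrArg _
      (DFinsupp.prod_zero_index (h := fun i (c : ZMod (p i)) => ZMod.toCircle (c * x i)))
  map_add_eq_mul' a b := by
    ext x
    rw [AddChar.mul_apply]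
    exact congrArg _ (DFinsupp.prod_add_index (h := fun i c => ZMod.toCircle (c * x i)) (by simp)
      fun i c d => by rw [add_mul, AddChar.map_add_eq_mul])

lemma piZModChar_apply (a : Π₀ i, ZMod (p i)) (x : ∀ i, ZMod (p i)) :
    piZModChar a x = ∏ i ∈ a.support, ZMod.toCircle (a i * x i) := rfl

lemma continuous_piZModChar (a : Π₀ i, ZMod (p i)) : Continuous (piZModChar a) :=
  continuous_finsetProd _ fun i _ =>
    (continuous_of_discreteTopology (f := fun z : ZMod (p i) => ZMod.toCircle (a i * z))).comp
      (continuous_apply i)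

lemma piZModChar_single_apply (j : ι) (c : ZMod (p j)) (x : ∀ i, ZMod (p i)) :
    piZModChar (DFinsupp.single j c) x = ZMod.toCircle (c * x j) :=
  DFinsupp.prod_single_index (h := fun i c => ZMod.toCircle (c * x i)) (by simp)

lemma piZModChar_apply_single_one (a : Π₀ i, ZMod (p i)) (j : ι) :
    piZModChar a (Pi.single j 1) = ZMod.toCircle (a j) := by
  rw [piZModChar_apply, Finset.prod_eq_single j]
  · simp
  · intro i _ hij; simp [hij]
  · intro hj; simp [DFinsupp.notMem_support_iff.1 hj]

lemma piZModChar_injective : Function.Injective (piZModChar (p := p)) := fun a b hab =>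
  DFinsupp.ext fun j => ZMod.injective_toCircle <| by
    rw [← piZModChar_apply_single_one, ← piZModChar_apply_single_one, hab]

lemma eq_zero_of_piZModChar_natCast_eq_one (hp : Pairwise (Nat.Coprime on p)) {n : ℕ}
    (hn : ∀ i, n.Coprime (p i)) {c : Π₀ i, ZMod (p i)}
    (hc : piZModChar c (n : ∀ i, ZMod (p i)) = 1) : c = 0 := by
  by_contra hc0
  obtain ⟨j, hj⟩ := Finset.nonempty_iff_ne_empty.2 (DFinsupp.support_eq_empty.not.2 hc0)
  refine DFinsupp.mem_support_iff.1 hj ?_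
  -- The factors of `piZModChar c n` are roots of unity of pairwise coprime orders `p i`.
  have hj1 : ZMod.toCircle (c j * (n : ZMod (p j))) = 1 := by
    refine Finset.eq_one_of_prod_eq_one_of_pow_eq_one (hp.set_pairwise _) (fun i _ => ?_) hc hj
    rw [← AddChar.map_nsmul_eq_pow, nsmul_eq_mul, ZMod.natCast_self, zero_mul,
      AddChar.map_zero_eq_one]
  have : c j * (n : ZMod (p j)) = 0 :=
    ZMod.injective_toCircle (by rw [hj1, AddChar.map_zero_eq_one])
  exact ((ZMod.isUnit_iff_coprime n (p j)).2 (hn j)).mul_left_eq_zero.1 this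

lemma piZModChar_natCast_injective (hp : Pairwise (Nat.Coprime on p)) {n : ℕ}
    (hn : ∀ i, n.Coprime (p i)) :
    Function.Injective fun a : Π₀ i, ZMod (p i) => piZModChar a (n : ∀ i, ZMod (p i)) :=
  fun a b hab => sub_eq_zero.1 <| eq_zero_of_piZModChar_natCast_eq_one hp hn <| by
    rw [AddChar.map_sub_eq_div, AddChar.div_apply', div_eq_one]
    exact hab

noncomputable def piZModCharContinuousMap (a : Π₀ i, ZMod (p i)) : C(∀ i, ZMod (p i), ℂ) :=
  ⟨fun x => piZModChar a x, continuous_subtype_val.comp (continuous_piZModChar a)⟩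

lemma piZModCharContinuousMap_zero : piZModCharContinuousMap (0 : Π₀ i, ZMod (p i)) = 1 := by
  ext x
  simp [piZModCharContinuousMap]

lemma piZModCharContinuousMap_add (a b : Π₀ i, ZMod (p i)) :
    piZModCharContinuousMap (a + b) = piZModCharContinuousMap a * piZModCharContinuousMap b := by
  ext x
  simp [piZModCharContinuousMap, AddChar.map_add_eq_mul]

lemma star_piZModCharContinuousMap (a : Π₀ i, ZMod (p i)) :
    star (piZModCharContinuousMap a) = piZModCharContinuousMap (-a) := by
  ext x
  change conj (piZModChar a x : ℂ) = (piZModChar (-a) x : ℂ)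
  rw [AddChar.map_neg_eq_inv, AddChar.inv_apply', Circle.coe_inv_eq_conj]

lemma dense_span_piZModCharContinuousMap :
    Dense (span ℂ (range (piZModCharContinuousMap (p := p))) : Set C(∀ i, ZMod (p i), ℂ)) := by
  set s := range (piZModCharContinuousMap (p := p))
  have hmul : (Submonoid.closure s : Set C(∀ i, ZMod (p i), ℂ)) ⊆ s := fun x hx => by
    induction hx using Submonoid.closure_induction with
    | mem x hx => exact hx
    | one => exact ⟨0, piZModCharContinuousMap_zero⟩
    | mul x y _ _ hx hy =>
      obtain ⟨a, rfl⟩ := hx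
      obtain ⟨b, rfl⟩ := hy
      exact ⟨a + b, piZModCharContinuousMap_add a b⟩
  have hstar : star s ⊆ s := by
    rintro x ⟨a, ha⟩
    exact ⟨-a, by rw [← star_piZModCharContinuousMap, ha, star_star]⟩
  have hspan : Subalgebra.toSubmodule (StarAlgebra.adjoin ℂ s).toSubalgebra = span ℂ s := by
    rw [StarAlgebra.adjoin_eq_span, Set.union_eq_left.2 hstar]
    exact le_antisymm (span_mono hmul) (span_mono Submonoid.subset_closure)
  have hsep : (StarAlgebra.adjoin ℂ s).SeparatesPoints := by
    intro x y hxy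
    obtain ⟨i, hi⟩ := Function.ne_iff.1 hxy
    refine ⟨_, ⟨piZModCharContinuousMap (DFinsupp.single i 1),
      StarAlgebra.subset_adjoin ℂ s ⟨_, rfl⟩, rfl⟩, ?_⟩
    simpa [piZModCharContinuousMap, piZModChar_single_apply] using
      fun h => hi (ZMod.injective_toCircle (Circle.coe_injective h))
  rw [← hspan]
  change Dense (StarAlgebra.adjoin ℂ s : Set C(∀ i, ZMod (p i), ℂ))
  rw [dense_iff_closure_eq, ← StarSubalgebra.topologicalClosure_coe,
    ContinuousMap.starSubalgebra_topologicalClosure_eq_top_of_separatesPoints _ hsep,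
    StarSubalgebra.coe_top]

end PiZModChar

section PiZModCharLp

variable {ι : Type*} [DecidableEq ι] [Countable ι] {p : ι → ℕ} [∀ i, NeZero (p i)]
  (μ : Measure (∀ i, ZMod (p i))) [IsProbabilityMeasure μ]

noncomputable def piZModCharLp (a : Π₀ i, ZMod (p i)) : Lp ℂ 2 μ :=
  ContinuousMap.toLp 2 μ ℂ (piZModCharContinuousMap a)

lemma orthonormal_piZModCharLp [μ.IsAddRightInvariant] : Orthonormal ℂ (piZModCharLp μ) := by
  rw [orthonormal_iff_ite]
  intro a b
  have hint : ∀ x, piZModCharContinuousMap b x * conj (piZModCharContinuousMap a x)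
      = (((piZModChar a)⁻¹ * piZModChar b) x : ℂ) := fun x => by
    change (piZModChar b x : ℂ) * conj (piZModChar a x : ℂ) = _
    rw [AddChar.mul_apply, AddChar.inv_apply', Circle.coe_mul, Circle.coe_inv_eq_conj, mul_comm]
  rw [piZModCharLp, piZModCharLp, ContinuousMap.inner_toLp]
  simp_rw [hint]
  split_ifs with hab
  · simp [hab]
  · exact integral_addChar_eq_zero μ
      (fun h => hab (piZModChar_injective (inv_mul_eq_one.1 h)))

lemma dense_span_piZModCharLp :
    Dense (span ℂ (range (piZModCharLp μ)) : Set (Lp ℂ 2 μ)) := by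
  have himg := (ContinuousMap.toLp_denseRange ℂ μ ℂ (p := 2) (by norm_num)).dense_image
    (ContinuousMap.toLp 2 μ ℂ).continuous dense_span_piZModCharContinuousMap
  rwa [← ContinuousLinearMap.coe_coe, ← Submodule.map_coe, Submodule.map_span,
    ← Set.range_comp] at himg

noncomputable def piZModCharBasis [μ.IsAddRightInvariant] :
    HilbertBasis (Π₀ i, ZMod (p i)) ℂ (Lp ℂ 2 μ) :=
  HilbertBasis.mk (orthonormal_piZModCharLp μ)
    (Submodule.dense_iff_topologicalClosure_eq_top.1 (dense_span_piZModCharLp μ)).ge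

lemma coe_piZModCharBasis [μ.IsAddRightInvariant] :
    ⇑(piZModCharBasis μ) = piZModCharLp μ :=
  HilbertBasis.coe_mk _ _

lemma compMeasurePreserving_piZModCharLp [μ.IsAddRightInvariant] (t : ∀ i, ZMod (p i))
    (a : Π₀ i, ZMod (p i)) :
    Lp.compMeasurePreserving (· + t) (measurePreserving_add_right μ t) (piZModCharLp μ a)
      = (piZModChar a t : ℂ) • piZModCharLp μ a :=
  Lp.compMeasurePreserving_toLp_eq_smul _ fun x => by
    simp [piZModCharContinuousMap, AddChar.map_add_eq_mul, mul_comm]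

end PiZModCharLp

theorem koopman_simple_spectrum_of_coprime_power_general
    (p : ℕ → ℕ) (hp : ∀ i, (p i).Prime) (hinj : Function.Injective p)
    (μ : Measure (∀ i, ZMod (p i))) [IsProbabilityMeasure μ]
    (hμ : ∀ x : ∀ i, ZMod (p i), μ.map (fun y => y + x) = μ)
    (g : ∀ i, ZMod (p i)) (hg : ∀ i, g i = 1)
    (n : ℕ) (hcop : ∀ i, Nat.Coprime n (p i)) :
    ∃ f : Lp ℂ 2 μ,
      Dense (↑(Submodule.span ℂ
          {h : Lp ℂ 2 μ | ∃ k : ℤ,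
            (h : (∀ i, ZMod (p i)) → ℂ) =ᵐ[μ] fun x => f (x + (k * n) • g)}) :
        Set (Lp ℂ 2 μ)) := by
  have : ∀ i, NeZero (p i) := fun i => ⟨(hp i).ne_zero⟩
  have : μ.IsAddRightInvariant := ⟨hμ⟩
  obtain rfl : g = 1 := funext hg
  have hcoprime : Pairwise (Nat.Coprime on p) := fun i j hij =>
    (Nat.coprime_primes (hp i) (hp j)).2 (hinj.ne hij)
  have hT := measurePreserving_add_right μ (n : ∀ i, ZMod (p i))
  obtain ⟨f, hf⟩ := (piZModCharBasis μ).exists_forall_inner_ne_zero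
  have hdense := (piZModCharBasis μ).dense_span_iterate (Lp.compMeasurePreservingₗᵢ ℂ _ hT)
    (Circle.coe_injective.comp (piZModChar_natCast_injective hcoprime hcop))
    (fun a => by rw [coe_piZModCharBasis]; exact compMeasurePreserving_piZModCharLp μ _ a) hf
  refine ⟨f, hdense.mono (span_mono ?_)⟩
  rintro _ ⟨k, rfl⟩
  refine ⟨k, ?_⟩
  change (Lp.compMeasurePreserving _ hT)^[k] f =ᵐ[μ] _
  rw [Lp.compMeasurePreserving_iterate]
  filter_upwards [Lp.coeFn_compMeasurePreserving f (hT.iterate k)] with x hx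
  rw [hx, comp_apply, add_right_iterate, zsmul_one, nsmul_eq_mul]
  push_cast
  rfl

/-- With `X = ∏ i, ZMod (p i)` (the `p i` pairwise distinct primes),
`μ` its Haar probability measure and `R x = x + g` the translation by the element `g`
with all coordinates `1`: for every positive integer `n` coprime to every `p i`
(in particular for `n = 1`), the Koopman operator of `R^[n]` on `L²(X, μ)` has simple
spectrum; i.e. there is `f ∈ L²(X, μ)` whose orbit `{f ∘ (R^[n])^k : k ∈ ℤ}`
(the `k`-th power of `R^[n]` is the translation by `(k * n) • g`) has dense linear
span in `L²(X, μ)`. -/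
theorem koopman_simple_spectrum_of_coprime_power
    (p : ℕ → ℕ) (hp : ∀ i, (p i).Prime) (hinj : Function.Injective p)
    (μ : Measure (∀ i, ZMod (p i))) [IsProbabilityMeasure μ]
    (hμ : ∀ x : ∀ i, ZMod (p i), μ.map (fun y => y + x) = μ)
    (g : ∀ i, ZMod (p i)) (hg : ∀ i, g i = 1)
    (n : ℕ) (hn : 0 < n) (hcop : ∀ i, Nat.Coprime n (p i)) :
    ∃ f : Lp ℂ 2 μ,
      Dense (↑(Submodule.span ℂ
          {h : Lp ℂ 2 μ | ∃ k : ℤ,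
            (h : (∀ i, ZMod (p i)) → ℂ) =ᵐ[μ] fun x => f (x + (k * n) • g)}) :
        Set (Lp ℂ 2 μ)) :=
  koopman_simple_spectrum_of_coprime_power_general p hp hinj μ hμ g hg n hcop
end

section
/- Let p be a positive integer and let G_p be the group presented by two generators s, φ subject to the relations φ^p = e and the commutation relations [φ^i s φ^{-i}, φ^j s φ^{-j}] = e for all 0 ≤ i, j ≤ p − 1. Then for all integers n, m, if φ^n · (s φ) · φ^m = s φ holds in G_p, then p divides n and p divides m. -/
/-!
`G_p` maps onto the wreath product `ℤ ≀ ℤ/p = ℤ^(ℤ/p) ⋊ ℤ/p` by sending `s` to a lamp at the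
origin and `φ` to the generator of `ℤ/p`: the conjugates `φ^i s φ^{-i}` are lamps at `i`, which lie
in the abelian base, so all relators die. In the image of `φ^n (s φ) φ^m` the lamp sits at `n`,
which forces `n ≡ 0`, and the `ℤ/p`-components give `n + 1 + m ≡ 1`, hence `m ≡ 0`.
-/

open scoped commutatorElement

/-- The relators of the group `G_p` generated by `s` (the generator `0`) and `φ`
(the generator `1`) subject to `φ^p = e` and the commutation of the conjugates
`φ^i s φ^{-i}` for `0 ≤ i, j ≤ p - 1`. -/
def gpRels (p : ℕ) : Set (FreeGroup (Fin 2)) :=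
  {FreeGroup.of (1 : Fin 2) ^ p} ∪
    ⋃ (i : Fin p) (j : Fin p),
      {⁅FreeGroup.of (1 : Fin 2) ^ (i : ℕ) * FreeGroup.of (0 : Fin 2) *
          (FreeGroup.of (1 : Fin 2) ^ (i : ℕ))⁻¹,
        FreeGroup.of (1 : Fin 2) ^ (j : ℕ) * FreeGroup.of (0 : Fin 2) *
          (FreeGroup.of (1 : Fin 2) ^ (j : ℕ))⁻¹⁆}

namespace RegularWreathProduct

variable {D Q : Type*} [Group D] [Group Q]

@[simp]
theorem inl_mul_left (q : Q) (w : D ≀ᵣ Q) : (inl q * w).left = fun x ↦ w.left (q⁻¹ * x) := by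
  simp [mul_def, left_inl]

@[simp]
theorem mul_inl_left (w : D ≀ᵣ Q) (q : Q) : (w * inl q).left = w.left :=
  mul_one w.left

theorem conj_right_eq_one (g : D ≀ᵣ Q) {a : D ≀ᵣ Q} (ha : a.right = 1) :
    (g * a * g⁻¹).right = 1 := by
  simp [mul_right, inv_right, ha]

theorem commute_of_right_eq_one {D : Type*} [CommGroup D] {a b : D ≀ᵣ Q}
    (ha : a.right = 1) (hb : b.right = 1) : Commute a b := by
  ext x
  · simp [mul_def, ha, hb, mul_comm]
  · simp [mul_def, ha, hb]

end RegularWreathProduct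

open RegularWreathProduct Multiplicative

abbrev GpModel (p : ℕ) : Type := Multiplicative ℤ ≀ᵣ Multiplicative (ZMod p)

namespace GpModel

variable (p : ℕ)

def s : GpModel p := ⟨Pi.mulSingle 1 (ofAdd 1), 1⟩

def φ : GpModel p := inl (ofAdd 1)

theorem φ_zpow (n : ℤ) : φ p ^ n = inl (ofAdd (n : ZMod p)) := by
  rw [φ, ← map_zpow, ← ofAdd_zsmul, zsmul_one]

theorem lift_gpRels_eq_one : ∀ r ∈ gpRels p, FreeGroup.lift ![s p, φ p] r = 1 := by
  rintro r (rfl | hr)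
  · simpa using φ_zpow p p
  · simp only [Set.mem_iUnion, Set.mem_singleton_iff] at hr
    obtain ⟨i, j, rfl⟩ := hr
    simp only [map_commutatorElement, commutatorElement_eq_one_iff_commute, map_mul, map_inv,
      map_pow, FreeGroup.lift_apply_of]
    exact commute_of_right_eq_one (conj_right_eq_one _ rfl) (conj_right_eq_one _ rfl)

theorem intCast_eq_zero_of_zpow_mul_mul_zpow_eq {n m : ℤ}
    (h : φ p ^ n * (s p * φ p) * φ p ^ m = s p * φ p) :
    (n : ZMod p) = 0 ∧ (m : ZMod p) = 0 := by
  rw [φ_zpow, φ_zpow] at h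
  have hn : (n : ZMod p) = 0 := by
    have hlamp := congrFun (congrArg left h) (ofAdd (n : ZMod p))
    by_contra hn
    simp [s, φ, Pi.mulSingle_apply, hn] at hlamp
  have hm : (m : ZMod p) = 0 := by
    simpa [s, φ, mul_right, hn] using congrArg (toAdd ∘ right) h
  exact ⟨hn, hm⟩

end GpModel

theorem gp_conjugation_relation_general (p : ℕ) (n m : ℤ)
    (h : (PresentedGroup.of (rels := gpRels p) (1 : Fin 2)) ^ n *
          (PresentedGroup.of (0 : Fin 2) * PresentedGroup.of (1 : Fin 2)) *
          (PresentedGroup.of (rels := gpRels p) (1 : Fin 2)) ^ m =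
        PresentedGroup.of (0 : Fin 2) * PresentedGroup.of (1 : Fin 2)) :
    (p : ℤ) ∣ n ∧ (p : ℤ) ∣ m := by
  have hmodel := congrArg (PresentedGroup.toGroup (GpModel.lift_gpRels_eq_one p)) h
  simp only [map_mul, map_zpow, PresentedGroup.toGroup.of] at hmodel
  simpa only [ZMod.intCast_zmod_eq_zero_iff_dvd] using
    GpModel.intCast_eq_zero_of_zpow_mul_mul_zpow_eq p hmodel

/-- In the presented group `G_p` (generators `s = of 0`, `φ = of 1`,
relations `φ^p = e` and `[φ^i s φ^{-i}, φ^j s φ^{-j}] = e` for `0 ≤ i, j ≤ p - 1`),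
if `φ^n * (s * φ) * φ^m = s * φ` for integers `n, m`, then `p ∣ n` and `p ∣ m`. -/
theorem gp_conjugation_relation (p : ℕ) (hp : 0 < p) (n m : ℤ)
    (h : (PresentedGroup.of (rels := gpRels p) (1 : Fin 2)) ^ n *
          (PresentedGroup.of (0 : Fin 2) * PresentedGroup.of (1 : Fin 2)) *
          (PresentedGroup.of (rels := gpRels p) (1 : Fin 2)) ^ m =
        PresentedGroup.of (0 : Fin 2) * PresentedGroup.of (1 : Fin 2)) :
    (p : ℤ) ∣ n ∧ (p : ℤ) ∣ m :=
  gp_conjugation_relation_general p n m h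
end
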